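/- arXiv:2504.02583 — 8 statements merged into one kernel-verified Lean document; each statement's English description precedes it below -/
import Mathlib

section
/- Let m,n be positive integers, A an m×n real matrix and γ ∈ [0,1)^m. Then (A,γ) belongs to W(ψ) for every decreasing function ψ : ℕ → [0,∞) with ∑_{q≥1} q^{n-1} ψ(q)^m = ∞ (i.e., for every such ψ there are infinitely many q ∈ ℤ^n with ⟨Aq − γ⟩ < ψ(‖q‖)) if and only if for every l ∈ ℕ the series S_l(A,γ) := ∑_{t=l}^∞ t^{n-1} · (min_{q ∈ ℤ^n, l ≤ ‖q‖ ≤ t} ⟨Aq − γ⟩^m) converges. -/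
open Filter

/-- The supremum norm of an integer vector, as a natural number. -/
def znn {n : ℕ} (q : Fin n → ℤ) : ℕ := Finset.univ.sup fun i => (q i).natAbs

/-- Supremum-norm distance of `y ∈ ℝ^m` to the integer lattice `ℤ^m`. -/
noncomputable def dz {m : ℕ} (y : Fin m → ℝ) : ℝ := ⨅ p : Fin m → ℤ, ‖y - fun i => (p i : ℝ)‖

/-- `⟨Aq - γ⟩`, the approximation error. -/
noncomputable def approxErr {m n : ℕ} (A : Matrix (Fin m) (Fin n) ℝ) (γ : Fin m → ℝ)
    (q : Fin n → ℤ) : ℝ := dz (A.mulVec (fun i => (q i : ℝ)) - γ)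

/-- `min_{q ∈ ℤ^n, l ≤ ‖q‖ ≤ t} ⟨Aq - γ⟩^m`. -/
noncomputable def minErr {m n : ℕ} (A : Matrix (Fin m) (Fin n) ℝ) (γ : Fin m → ℝ)
    (l t : ℕ) : ℝ :=
  sInf {x | ∃ q : Fin n → ℤ, l ≤ znn q ∧ znn q ≤ t ∧ x = approxErr A γ q ^ m}

set_option maxHeartbeats 1000000 in
lemma dz_nonneg {m : ℕ} (y : Fin m → ℝ) : 0 ≤ dz y :=
  Real.iInf_nonneg fun _ => norm_nonneg _

lemma approxErr_nonneg {m n : ℕ} (A : Matrix (Fin m) (Fin n) ℝ) (γ : Fin m → ℝ)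
    (q : Fin n → ℤ) : 0 ≤ approxErr A γ q := dz_nonneg _

lemma znn_const {n : ℕ} (hn : 0 < n) (k : ℕ) : znn (fun _ : Fin n => (k : ℤ)) = k := by
  haveI : NeZero n := ⟨hn.ne'⟩
  unfold znn
  rw [Finset.sup_const Finset.univ_nonempty]
  simp

lemma shell_bddBelow {m n : ℕ} (A : Matrix (Fin m) (Fin n) ℝ) (γ : Fin m → ℝ) (l t : ℕ) :
    BddBelow {x | ∃ q : Fin n → ℤ, l ≤ znn q ∧ znn q ≤ t ∧ x = approxErr A γ q ^ m} := by
  refine ⟨0, fun x hx => ?_⟩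
  obtain ⟨q, _, _, rfl⟩ := hx
  exact pow_nonneg (approxErr_nonneg A γ q) m

lemma shell_nonempty {m n : ℕ} (hn : 0 < n) (A : Matrix (Fin m) (Fin n) ℝ) (γ : Fin m → ℝ)
    {l t : ℕ} (h : l ≤ t) :
    Set.Nonempty {x | ∃ q : Fin n → ℤ, l ≤ znn q ∧ znn q ≤ t ∧ x = approxErr A γ q ^ m} :=
  ⟨_, fun _ => (l : ℤ), by rw [znn_const hn], by rw [znn_const hn]; exact ⟨h, rfl⟩⟩

lemma minErr_nonneg {m n : ℕ} (A : Matrix (Fin m) (Fin n) ℝ) (γ : Fin m → ℝ) (l t : ℕ) :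
    0 ≤ minErr A γ l t := by
  apply Real.sInf_nonneg
  rintro x ⟨q, _, _, rfl⟩
  exact pow_nonneg (approxErr_nonneg A γ q) m

lemma minErr_le {m n : ℕ} (A : Matrix (Fin m) (Fin n) ℝ) (γ : Fin m → ℝ) {l t : ℕ}
    {q : Fin n → ℤ} (h1 : l ≤ znn q) (h2 : znn q ≤ t) :
    minErr A γ l t ≤ approxErr A γ q ^ m :=
  csInf_le (shell_bddBelow A γ l t) ⟨q, h1, h2, rfl⟩

lemma le_minErr {m n : ℕ} (hn : 0 < n) (A : Matrix (Fin m) (Fin n) ℝ) (γ : Fin m → ℝ)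
    {l t : ℕ} (h : l ≤ t) {c : ℝ}
    (hc : ∀ q : Fin n → ℤ, l ≤ znn q → znn q ≤ t → c ≤ approxErr A γ q ^ m) :
    c ≤ minErr A γ l t := by
  apply le_csInf (shell_nonempty hn A γ h)
  rintro x ⟨q, h1, h2, rfl⟩
  exact hc q h1 h2

lemma minErr_antitone {m n : ℕ} (hn : 0 < n) (A : Matrix (Fin m) (Fin n) ℝ) (γ : Fin m → ℝ)
    {l t t' : ℕ} (hl : l ≤ t) (htt : t ≤ t') :
    minErr A γ l t' ≤ minErr A γ l t := by
  apply csInf_le_csInf (shell_bddBelow A γ l t') (shell_nonempty hn A γ hl)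
  rintro x ⟨q, h1, h2, rfl⟩
  exact ⟨q, h1, h2.trans htt, rfl⟩

lemma znn_le_finite {n : ℕ} (N : ℕ) : {q : Fin n → ℤ | znn q ≤ N}.Finite := by
  apply Set.Finite.subset (Set.Finite.pi (fun i : Fin n => Set.finite_Icc (-(N:ℤ)) N))
  intro q hq
  simp only [Set.mem_pi, Set.mem_univ, Set.mem_Icc, forall_true_left]
  intro i
  have : (q i).natAbs ≤ N :=
    le_trans (Finset.le_sup (f := fun i => (q i).natAbs) (Finset.mem_univ i)) hq
  omega

lemma summable_of_eqOn_atTop (F G : ℕ → ℝ) (l : ℕ) (h : ∀ t, l ≤ t → F t = G t)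
    (hG : Summable G) : Summable F := by
  rw [← summable_nat_add_iff l]
  exact ((summable_nat_add_iff l).mpr hG).congr fun t =>
    (h (t + l) (Nat.le_add_left l t)).symm

lemma summable_of_le_atTop (F G : ℕ → ℝ) (l : ℕ) (h0 : ∀ t, 0 ≤ F t)
    (h : ∀ t, l ≤ t → F t ≤ G t) (hG : Summable G) : Summable F := by
  rw [← summable_nat_add_iff l]
  exact Summable.of_nonneg_of_le (fun t => h0 _) (fun t => h (t + l) (Nat.le_add_left l t))
    ((summable_nat_add_iff l).mpr hG)

set_option maxHeartbeats 1000000 in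
theorem omega_iff_S_summable (m n : ℕ) (hm : 0 < m) (hn : 0 < n)
    (A : Matrix (Fin m) (Fin n) ℝ) (γ : Fin m → ℝ)
    (hγ : ∀ i, 0 ≤ γ i ∧ γ i < 1) :
    (∀ ψ : ℕ → ℝ, Antitone ψ → (∀ q, 0 ≤ ψ q) →
        ¬ Summable (fun q : ℕ => (q : ℝ) ^ (n - 1) * ψ q ^ m) →
        {q : Fin n → ℤ | approxErr A γ q < ψ (znn q)}.Infinite)
    ↔ (∀ l : ℕ, 1 ≤ l →
        Summable (fun t : ℕ => if l ≤ t then (t : ℝ) ^ (n - 1) * minErr A γ l t else 0)) := by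
  constructor
  · intro H l hl
    by_contra hS
    set ψ : ℕ → ℝ := fun t => (minErr A γ l (max l t)) ^ ((m : ℝ)⁻¹) with hψdef
    have hψpow : ∀ t, ψ t ^ m = minErr A γ l (max l t) := fun t =>
      Real.rpow_inv_natCast_pow (minErr_nonneg A γ l (max l t)) hm.ne'
    have hψ0 : ∀ t, 0 ≤ ψ t := fun t =>
      Real.rpow_nonneg (minErr_nonneg A γ l (max l t)) _
    have hψanti : Antitone ψ := by
      intro a b hab
      exact Real.rpow_le_rpow (minErr_nonneg A γ l (max l b))
        (minErr_antitone hn A γ (le_max_left l a) (max_le_max le_rfl hab))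
        (by positivity)
    have hdiv : ¬ Summable (fun q : ℕ => (q : ℝ) ^ (n - 1) * ψ q ^ m) := by
      intro hsum
      apply hS
      refine summable_of_eqOn_atTop _ _ l (fun t ht => ?_) hsum
      rw [if_pos ht, hψpow, max_eq_right ht]
    have hinf := H ψ hψanti hψ0 hdiv
    apply hinf
    apply (znn_le_finite l).subset
    intro q hq
    simp only [Set.mem_setOf_eq] at hq ⊢
    by_contra hql
    push_neg at hql
    have hlq : l ≤ znn q := hql.le
    have h1 : minErr A γ l (znn q) ≤ approxErr A γ q ^ m := minErr_le A γ hlq le_rfl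
    have h2 : approxErr A γ q ^ m < ψ (znn q) ^ m :=
      pow_lt_pow_left₀ hq (approxErr_nonneg A γ q) hm.ne'
    rw [hψpow, max_eq_right hlq] at h2
    exact absurd (h1.trans_lt h2) (lt_irrefl _)
  · intro H ψ hanti hpos hdiv
    by_contra hfin
    rw [Set.not_infinite] at hfin
    obtain ⟨N, hN⟩ := (hfin.image znn).bddAbove
    set l := N + 1 with hldef
    have hl : 1 ≤ l := Nat.le_add_left 1 N
    have key : ∀ q : Fin n → ℤ, l ≤ znn q → ψ (znn q) ≤ approxErr A γ q := by
      intro q hq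
      by_contra hc
      push_neg at hc
      have : znn q ≤ N := hN (Set.mem_image_of_mem znn hc)
      omega
    apply hdiv
    refine summable_of_le_atTop _ _ l (fun t => ?_) (fun t ht => ?_) (H l hl)
    · exact mul_nonneg (pow_nonneg (Nat.cast_nonneg _) _) (pow_nonneg (hpos _) m)
    · rw [if_pos ht]
      refine mul_le_mul_of_nonneg_left ?_ (pow_nonneg (Nat.cast_nonneg _) _)
      refine le_minErr hn A γ ht fun q hq1 hq2 => ?_
      refine pow_le_pow_left₀ (hpos _) ?_ m
      exact (hanti hq2).trans (key q hq1)
end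

section
/- Let n be a positive integer and (a_t)_{t≥1} a decreasing sequence of non-negative real numbers such that ∑_{t=1}^∞ t^{n-1} a_t < ∞. Then t^n · a_t → 0 as t → ∞. -/
open Filter
set_option maxHeartbeats 1000000 in

theorem olivier_general (n : ℕ) (hn : 0 < n) (a : ℕ → ℝ)
    (ha : Antitone a) (hpos : ∀ t, 0 ≤ a t)
    (hsum : Summable (fun t : ℕ => (t : ℝ) ^ (n - 1) * a t)) :
    Tendsto (fun t : ℕ => (t : ℝ) ^ n * a t) atTop (nhds 0) := by
  set F : ℕ → ℝ := fun s => (s : ℝ) ^ (n - 1) * a s with hF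
  have hL := hsum.hasSum.tendsto_sum_nat
  have h1 : Tendsto (fun t : ℕ => t + 1) atTop atTop :=
    tendsto_add_atTop_nat 1
  have h2 : Tendsto (fun t : ℕ => t / 2 + 1) atTop atTop := by
    apply tendsto_atTop_atTop.2
    intro b
    exact ⟨2 * b, fun t ht => by omega⟩
  have hg0 : Tendsto (fun t : ℕ => (∑ s ∈ Finset.range (t + 1), F s)
      - ∑ s ∈ Finset.range (t / 2 + 1), F s) atTop (nhds 0) := by
    have := (hL.comp h1).sub (hL.comp h2)
    simpa using this
  have hgIco : ∀ t : ℕ, (∑ s ∈ Finset.range (t + 1), F s)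
      - ∑ s ∈ Finset.range (t / 2 + 1), F s
      = ∑ s ∈ Finset.Ico (t / 2 + 1) (t + 1), F s := by
    intro t
    rw [Finset.sum_Ico_eq_sub F (Nat.succ_le_succ (Nat.div_le_self t 2))]
  have key : ∀ t : ℕ, (t : ℝ) ^ n * a t
      ≤ 2 ^ n * ((∑ s ∈ Finset.range (t + 1), F s)
        - ∑ s ∈ Finset.range (t / 2 + 1), F s) := by
    intro t
    rw [hgIco t]
    have hb : ∀ s ∈ Finset.Ico (t / 2 + 1) (t + 1),
        ((t : ℝ) / 2) ^ (n - 1) * a t ≤ F s := by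
      intro s hs
      simp only [Finset.mem_Ico] at hs
      have hts : (t : ℝ) / 2 ≤ (s : ℝ) := by
        have : t ≤ 2 * s := by omega
        have : (t : ℝ) ≤ 2 * s := by exact_mod_cast this
        linarith
      have hpow : ((t : ℝ) / 2) ^ (n - 1) ≤ (s : ℝ) ^ (n - 1) :=
        pow_le_pow_left₀ (by positivity) hts _
      have has : a t ≤ a s := ha (by omega)
      exact mul_le_mul hpow has (hpos t) (by positivity)
    have hcard := Finset.card_nsmul_le_sum _ _ _ hb
    rw [Nat.card_Ico] at hcard
    have hcardR : (t : ℝ) / 2 ≤ ((t + 1 - (t / 2 + 1) : ℕ) : ℝ) := by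
      have : t ≤ 2 * (t + 1 - (t / 2 + 1)) := by omega
      have : (t : ℝ) ≤ 2 * ((t + 1 - (t / 2 + 1) : ℕ) : ℝ) := by exact_mod_cast this
      linarith
    have hmid : ((t : ℝ) / 2) ^ n * a t
        ≤ ∑ s ∈ Finset.Ico (t / 2 + 1) (t + 1), F s := by
      calc ((t : ℝ) / 2) ^ n * a t
          = ((t : ℝ) / 2) * (((t : ℝ) / 2) ^ (n - 1) * a t) := by
            rw [← mul_assoc, ← pow_succ']
            congr 2
            omega
        _ ≤ ((t + 1 - (t / 2 + 1) : ℕ) : ℝ) * (((t : ℝ) / 2) ^ (n - 1) * a t) := by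
            exact mul_le_mul_of_nonneg_right hcardR
              (mul_nonneg (by positivity) (hpos t))
        _ ≤ ∑ s ∈ Finset.Ico (t / 2 + 1) (t + 1), F s := by
            simpa [nsmul_eq_mul] using hcard
    calc (t : ℝ) ^ n * a t = 2 ^ n * (((t : ℝ) / 2) ^ n * a t) := by
          rw [← mul_assoc, ← mul_pow]
          ring_nf
      _ ≤ 2 ^ n * ((∑ s ∈ Finset.Ico (t / 2 + 1) (t + 1), F s)) := by
          apply mul_le_mul_of_nonneg_left hmid
          positivity
  have hup : Tendsto (fun t : ℕ => 2 ^ n * ((∑ s ∈ Finset.range (t + 1), F s)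
      - ∑ s ∈ Finset.range (t / 2 + 1), F s)) atTop (nhds 0) := by
    simpa using hg0.const_mul ((2 : ℝ) ^ n)
  exact squeeze_zero (fun t => mul_nonneg (by positivity) (hpos t)) key hup
end

section
/- Let m,n be positive integers, A ∈ [0,1)^{m×n}, γ ∈ [0,1)^m with liminf_{‖q‖→∞, q ∈ ℤ^n} ‖q‖^n ⟨Aq − γ⟩^m = 0. Then there exists a decreasing function ψ : ℕ → [0,∞) with ∑_{q≥1} q^{n-1} ψ(q)^m ≤ 1 such that ⟨Aq − γ⟩ < ψ(‖q‖) for infinitely many q ∈ ℤ^n. -/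
open Filter

/-! Take good approximations `q_k` with `‖q_k‖ = N_k` strictly increasing and
`N_k^n ⟨A q_k - γ⟩^m < 2^{-(k+1)}`, and let `ψ^m` be the staircase equal to
`c_k = 2^{-(k+1)} / N_k^n` on `(N_{k-1}, N_k]`. Then `⟨A q_k - γ⟩ < ψ(N_k)` for every `k`, while the
`k`-th step contributes at most `N_k · N_k^{n-1} c_k = 2^{-(k+1)}` to `∑ q^{n-1} ψ(q)^m`. -/

theorem exists_seq_strictMono_comp_forall_lt {α : Type*} {f : α → ℕ} {g : α → ℝ}
    (h : ∀ ε : ℝ, 0 < ε → ∀ N : ℕ, ∃ a, N ≤ f a ∧ g a < ε) {ε : ℕ → ℝ} (hε : ∀ k, 0 < ε k) :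
    ∃ Q : ℕ → α, StrictMono (f ∘ Q) ∧ (∀ k, 0 < f (Q k)) ∧ ∀ k, g (Q k) < ε k := by
  choose pick hpick_gt hpick_lt using fun k (b : ℕ) => h (ε k) (hε k) (b + 1)
  let Q : ℕ → α := fun k => Nat.rec (pick 0 0) (fun k prev => pick (k + 1) (f prev)) k
  refine ⟨Q, strictMono_nat_of_lt_succ fun k => hpick_gt (k + 1) _, fun k => ?_, fun k => ?_⟩
  · cases k with
    | zero => exact hpick_gt 0 0
    | succ k => exact (Nat.succ_pos _).trans_le (hpick_gt (k + 1) _)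
  · cases k with
    | zero => exact hpick_lt 0 0
    | succ k => exact hpick_lt (k + 1) _

theorem Finset.sum_le_tsum_of_fiber_le {ι κ : Type*} [DecidableEq κ] {f : ι → ℝ} {b : κ → ℝ}
    (g : ι → κ) (s : Finset ι)
    (hb : 0 ≤ b) (hb_sum : Summable b) (hfiber : ∀ k, ∑ t ∈ s with g t = k, f t ≤ b k) :
    ∑ t ∈ s, f t ≤ ∑' k, b k := calc
  ∑ t ∈ s, f t = ∑ k ∈ s.image g, ∑ t ∈ s with g t = k, f t :=
    (Finset.sum_fiberwise_of_maps_to (fun _ ht => Finset.mem_image_of_mem g ht) f).symm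
  _ ≤ ∑ k ∈ s.image g, b k := Finset.sum_le_sum fun k _ => hfiber k
  _ ≤ ∑' k, b k := hb_sum.sum_le_tsum _ fun k _ => hb k

noncomputable def stairIndex (N : ℕ → ℕ) (t : ℕ) : ℕ := sInf {k | t ≤ N k}

section Staircase

variable {N : ℕ → ℕ}

theorem le_apply_stairIndex (hN : StrictMono N) (t : ℕ) : t ≤ N (stairIndex N t) :=
  Nat.sInf_mem (s := {k | t ≤ N k}) ⟨t, hN.le_apply⟩

theorem stairIndex_mono (hN : StrictMono N) : Monotone (stairIndex N) := fun _ t hst =>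
  Nat.sInf_le (hst.trans (le_apply_stairIndex hN t))

theorem stairIndex_apply (hN : StrictMono N) (k : ℕ) : stairIndex N (N k) = k :=
  le_antisymm (Nat.sInf_le (le_refl (N k))) (hN.le_iff_le.mp (le_apply_stairIndex hN (N k)))

theorem sum_range_stair_le (hN : StrictMono N) {c : ℕ → ℝ} (hc : 0 ≤ c) {n : ℕ} (hn : 0 < n)
    (hsum : Summable fun k => (N k : ℝ) ^ n * c k) (T : ℕ) :
    ∑ t ∈ Finset.range T, ((t + 1 : ℕ) : ℝ) ^ (n - 1) * c (stairIndex N (t + 1)) ≤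
      ∑' k, (N k : ℝ) ^ n * c k := by
  refine Finset.sum_le_tsum_of_fiber_le (fun t => stairIndex N (t + 1)) _
    (fun k => mul_nonneg (by positivity) (hc k)) hsum fun k => ?_
  have hfiber_sub : {t ∈ Finset.range T | stairIndex N (t + 1) = k} ⊆ Finset.range (N k) :=
    fun t ht => by
      obtain ⟨-, rfl⟩ := Finset.mem_filter.mp ht
      exact Finset.mem_range.mpr (le_apply_stairIndex hN (t + 1))
  calc ∑ t ∈ Finset.range T with stairIndex N (t + 1) = k,
        ((t + 1 : ℕ) : ℝ) ^ (n - 1) * c (stairIndex N (t + 1))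
      ≤ ∑ t ∈ Finset.range T with stairIndex N (t + 1) = k, (N k : ℝ) ^ (n - 1) * c k := by
        refine Finset.sum_le_sum fun t ht => ?_
        obtain ⟨-, rfl⟩ := Finset.mem_filter.mp ht
        gcongr
        · exact hc _
        · exact_mod_cast le_apply_stairIndex hN (t + 1)
    _ ≤ ∑ t ∈ Finset.range (N k), (N k : ℝ) ^ (n - 1) * c k :=
        Finset.sum_le_sum_of_subset_of_nonneg hfiber_sub fun _ _ _ =>
          mul_nonneg (by positivity) (hc k)
    _ = (N k : ℝ) ^ n * c k := by
        rw [Finset.sum_const, Finset.card_range, nsmul_eq_mul, ← mul_assoc, ← pow_succ',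
          Nat.sub_add_cancel hn]

end Staircase

theorem exists_antitone_stair_pow_eq {N : ℕ → ℕ} (hN : StrictMono N) (hN_pos : ∀ k, 0 < N k)
    {m n : ℕ} (hm : m ≠ 0) (hn : 0 < n) :
    ∃ ψ : ℕ → ℝ, Antitone ψ ∧ (∀ t, 0 ≤ ψ t) ∧
      (∀ k, (N k : ℝ) ^ n * ψ (N k) ^ m = 1 / 2 / 2 ^ k) ∧
      ∀ T, ∑ t ∈ Finset.range T, ((t + 1 : ℕ) : ℝ) ^ (n - 1) * ψ (t + 1) ^ m ≤ 1 := by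
  have hNn_pos (k : ℕ) : (0 : ℝ) < (N k : ℝ) ^ n := pow_pos (Nat.cast_pos.mpr (hN_pos k)) n
  set c : ℕ → ℝ := fun k => 1 / 2 / 2 ^ k / (N k : ℝ) ^ n
  have hc : 0 ≤ c := fun k => (div_pos (by positivity) (hNn_pos k)).le
  have hc_anti : Antitone c := antitone_nat_of_succ_le fun k => by
    have hNk : (N k : ℝ) ≤ N (k + 1) := by exact_mod_cast (hN k.lt_succ_self).le
    show 1 / 2 / 2 ^ (k + 1) / (N (k + 1) : ℝ) ^ n ≤ 1 / 2 / 2 ^ k / (N k : ℝ) ^ n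
    gcongr
    · exact hNn_pos k
    · norm_num
    · exact Nat.le_succ k
  have hNc : (fun k => (N k : ℝ) ^ n * c k) = fun k => 1 / 2 / 2 ^ k :=
    funext fun k => mul_div_cancel₀ _ (hNn_pos k).ne'
  have hψ_pow (t : ℕ) : (c (stairIndex N t) ^ (m⁻¹ : ℝ)) ^ m = c (stairIndex N t) :=
    Real.rpow_inv_natCast_pow (hc _) hm
  refine ⟨fun t => c (stairIndex N t) ^ (m⁻¹ : ℝ),
    fun s t hst => Real.rpow_le_rpow (hc _) (hc_anti (stairIndex_mono hN hst)) (by positivity),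
    fun t => Real.rpow_nonneg (hc _) _, fun k => ?_, fun T => ?_⟩
  · rw [hψ_pow, stairIndex_apply hN]
    exact congrFun hNc k
  · simpa only [hψ_pow, hNc, tsum_geometric_two'] using
      sum_range_stair_le hN hc hn (hNc ▸ summable_geometric_two' 1) T

theorem not_bad_implies_approximable_general (m n : ℕ) (hm : 0 < m) (hn : 0 < n)
    (A : Matrix (Fin m) (Fin n) ℝ) (γ : Fin m → ℝ)
    (hliminf : ∀ ε : ℝ, 0 < ε → ∀ N : ℕ, ∃ q : Fin n → ℤ,
      N ≤ znn q ∧ (znn q : ℝ) ^ n * approxErr A γ q ^ m < ε) :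
    ∃ ψ : ℕ → ℝ, Antitone ψ ∧ (∀ q, 0 ≤ ψ q) ∧
      Summable (fun q : ℕ => ((q + 1 : ℕ) : ℝ) ^ (n - 1) * ψ (q + 1) ^ m) ∧
      (∑' q : ℕ, ((q + 1 : ℕ) : ℝ) ^ (n - 1) * ψ (q + 1) ^ m) ≤ 1 ∧
      {q : Fin n → ℤ | approxErr A γ q < ψ (znn q)}.Infinite := by
  obtain ⟨Q, hN, hN_pos, hQ⟩ := exists_seq_strictMono_comp_forall_lt hliminf
    (ε := fun k => 1 / 2 / 2 ^ k) fun k => by positivity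
  obtain ⟨ψ, hψ_anti, hψ_nonneg, hψ_stair, hpartial⟩ :=
    exists_antitone_stair_pow_eq hN hN_pos hm.ne' hn
  have hsum := summable_of_sum_range_le (fun t => by have := hψ_nonneg (t + 1); positivity) hpartial
  refine ⟨ψ, hψ_anti, hψ_nonneg, hsum, hsum.tsum_le_of_sum_range_le hpartial,
    Set.infinite_of_injective_forall_mem hN.injective.of_comp fun k => ?_⟩
  have hpow_lt : approxErr A γ (Q k) ^ m < ψ (znn (Q k)) ^ m := by
    have hNn_pos : (0 : ℝ) < (znn (Q k) : ℝ) ^ n := pow_pos (Nat.cast_pos.mpr (hN_pos k)) n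
    rw [← mul_lt_mul_iff_right₀ hNn_pos]
    exact (hQ k).trans_eq (hψ_stair k).symm
  exact lt_of_pow_lt_pow_left₀ m (hψ_nonneg _) hpow_lt

theorem not_bad_implies_approximable (m n : ℕ) (hm : 0 < m) (hn : 0 < n)
    (A : Matrix (Fin m) (Fin n) ℝ) (γ : Fin m → ℝ)
    (hA : ∀ i j, 0 ≤ A i j ∧ A i j < 1) (hγ : ∀ i, 0 ≤ γ i ∧ γ i < 1)
    (hliminf : ∀ ε : ℝ, 0 < ε → ∀ N : ℕ, ∃ q : Fin n → ℤ,
      N ≤ znn q ∧ (znn q : ℝ) ^ n * approxErr A γ q ^ m < ε) :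
    ∃ ψ : ℕ → ℝ, Antitone ψ ∧ (∀ q, 0 ≤ ψ q) ∧
      Summable (fun q : ℕ => ((q + 1 : ℕ) : ℝ) ^ (n - 1) * ψ (q + 1) ^ m) ∧
      (∑' q : ℕ, ((q + 1 : ℕ) : ℝ) ^ (n - 1) * ψ (q + 1) ^ m) ≤ 1 ∧
      {q : Fin n → ℤ | approxErr A γ q < ψ (znn q)}.Infinite :=
  not_bad_implies_approximable_general m n hm hn A γ hliminf
end

section
/- Let m,n be positive integers and let A ∈ [0,1)^{m×n} be a matrix that is not badly approximable, i.e., liminf_{‖q‖→∞, q ∈ ℤ^n} ‖q‖^n ⟨Aq⟩^m = 0. Then there exists γ ∈ [0,1)^m such that for every decreasing ψ : ℕ → [0,∞) with ∑_{q≥1} q^{n-1} ψ(q)^m = ∞, there are infinitely many q ∈ ℤ^n with ⟨Aq − γ⟩ < ψ(‖q‖). -/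
open Filter

/-!
Since `A` is not badly approximable, there are integer vectors `Q k` whose norms `T k` grow
lacunarily (`T k > 2 (T 0 + ⋯ + T (k-1)) + k`) and with `T k ^ n ⟨A Q k⟩ ^ m < 2 ^ (-k m)`.
Let `r k = A Q k - round (A Q k)` and let `γ` be the fractional part of `∑ r k`. The partial
sum `Q 0 + ⋯ + Q (K-1)` has norm between `K` and `2 T (K-1)` and approximates `γ` within the tail
`τ K = ∑_{j ≥ K} ‖r j‖`, and `T K ^ n τ K ^ m ≤ (2 · 2 ^ (-K)) ^ m`. If only finitely many `q`
satisfied `⟨A q - γ⟩ < ψ ‖q‖`, then `ψ` would be at most `τ K` at the norm of the `K`-th partial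
sum for large `K`; as `ψ` decreases, the block of `∑ q ^ (n-1) ψ q ^ m` between consecutive
partial-sum norms is then `O(2 ^ (-K m))`, so the series converges.
-/

open Finset

theorem summable_of_sum_Ico_le {a : ℕ → ℝ} (ha : ∀ q, 0 ≤ a q) {b : ℕ → ℕ} (hb : Monotone b)
    (hb_ge : ∀ K, K ≤ b K) {c : ℕ → ℝ} (hc_nonneg : ∀ K, 0 ≤ c K) (hc : Summable c) {M : ℕ}
    (h : ∀ K, M ≤ K → ∑ q ∈ Ico (b K) (b (K + 1)), a q ≤ c K) : Summable a := by
  have hblocks : ∀ K, M ≤ K →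
      ∑ q ∈ range (b K), a q ≤ ∑ q ∈ range (b M), a q + ∑ j ∈ Ico M K, c j := by
    intro K hK
    induction K, hK using Nat.le_induction with
    | base => simp
    | succ K hK ih =>
      rw [sum_Ico_succ_top hK, range_eq_Ico, range_eq_Ico,
        ← sum_Ico_consecutive _ (Nat.zero_le _) (hb K.le_succ)]
      rw [range_eq_Ico, range_eq_Ico] at ih
      linarith [h K hK]
  refine summable_of_sum_range_le (c := ∑ q ∈ range (b M), a q + ∑' j, c j) ha fun N => ?_
  calc ∑ q ∈ range N, a q ≤ ∑ q ∈ range (b (max M N)), a q :=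
        sum_le_sum_of_subset_of_nonneg (range_subset_range.2 ((le_max_right M N).trans (hb_ge _)))
          fun q _ _ => ha q
    _ ≤ ∑ q ∈ range (b M), a q + ∑ j ∈ Ico M (max M N), c j := hblocks _ (le_max_left M N)
    _ ≤ ∑ q ∈ range (b M), a q + ∑' j, c j := by
        gcongr
        exact hc.sum_le_tsum _ fun j _ => hc_nonneg j

theorem sum_Ico_pow_mul_pow_le {ψ : ℕ → ℝ} (hψ : Antitone ψ) (hψ_nonneg : ∀ q, 0 ≤ ψ q)
    {n : ℕ} (hn : 0 < n) (m : ℕ) {l u : ℕ} {τ : ℝ} (hτ : ψ l ≤ τ) :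
    ∑ q ∈ Ico l u, (q : ℝ) ^ (n - 1) * ψ q ^ m ≤ (u : ℝ) ^ n * τ ^ m := by
  have hterm : ∀ q ∈ Ico l u, (q : ℝ) ^ (n - 1) * ψ q ^ m ≤ (u : ℝ) ^ (n - 1) * τ ^ m := by
    intro q hq
    rw [mem_Ico] at hq
    have hψq := hψ_nonneg q
    gcongr
    · exact hq.2.le
    · exact (hψ hq.1).trans hτ
  have hτ_nonneg : 0 ≤ τ := (hψ_nonneg l).trans hτ
  calc ∑ q ∈ Ico l u, (q : ℝ) ^ (n - 1) * ψ q ^ m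
      ≤ #(Ico l u) • ((u : ℝ) ^ (n - 1) * τ ^ m) := sum_le_card_nsmul _ _ _ hterm
    _ ≤ (u : ℝ) * ((u : ℝ) ^ (n - 1) * τ ^ m) := by
        rw [nsmul_eq_mul, Nat.card_Ico]
        gcongr
        exact_mod_cast Nat.sub_le u l
    _ = (u : ℝ) ^ n * τ ^ m := by
        rw [← mul_assoc, ← pow_succ', Nat.sub_add_cancel hn]

theorem mul_tsum_pow_le_tsum_pow {x y : ℕ → ℝ} {c : ℝ} {m : ℕ} (hm : m ≠ 0) (hc : 0 ≤ c)
    (hx_nonneg : ∀ j, 0 ≤ x j) (hy_nonneg : ∀ j, 0 ≤ y j) (hx : Summable x) (hy : Summable y)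
    (h : ∀ j, c * x j ^ m ≤ y j ^ m) : c * (∑' j, x j) ^ m ≤ (∑' j, y j) ^ m := by
  set t := c ^ (m⁻¹ : ℝ)
  have ht : t ^ m = c := Real.rpow_inv_natCast_pow hc hm
  have ht_nonneg : 0 ≤ t := Real.rpow_nonneg hc _
  have hterm : ∀ j, t * x j ≤ y j := fun j =>
    (pow_le_pow_iff_left₀ (mul_nonneg ht_nonneg (hx_nonneg j)) (hy_nonneg j) hm).1
      (by rw [mul_pow, ht]; exact h j)
  rw [← ht, ← mul_pow, ← tsum_mul_left]
  exact pow_le_pow_left₀ (tsum_nonneg fun j => mul_nonneg ht_nonneg (hx_nonneg j))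
    ((hx.mul_left t).tsum_le_tsum hterm hy) m

def IsLacunary (T : ℕ → ℕ) : Prop :=
  ∀ k, 2 * ∑ j ∈ range k, T j + k < T k

theorem IsLacunary.two_mul_sum_add_lt {T : ℕ → ℕ} (hT : IsLacunary T) (k : ℕ) :
    2 * ∑ j ∈ range k, T j + k < T k :=
  hT k

theorem exists_seq_isLacunary {α : Type*} (f : α → ℕ) (P : ℕ → α → Prop)
    (h : ∀ k N, ∃ x, N ≤ f x ∧ P k x) :
    ∃ x : ℕ → α, IsLacunary (fun k => f (x k)) ∧ ∀ k, P k (x k) := by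
  choose c hc using h
  let S : ℕ → ℕ := fun k => Nat.rec 0 (fun k s => s + f (c k (2 * s + k + 1))) k
  have hS : ∀ k, S k = ∑ j ∈ range k, f (c j (2 * S j + j + 1)) := by
    intro k
    induction k with
    | zero => rfl
    | succ k ih => rw [sum_range_succ, ← ih]
  refine ⟨fun k => c k (2 * S k + k + 1), fun k => ?_, fun k => (hc _ _).2⟩
  rw [← hS]
  exact (hc _ _).1

theorem znn_zero {n : ℕ} : znn (0 : Fin n → ℤ) = 0 := by
  simp [znn]

theorem natAbs_le_znn {n : ℕ} (q : Fin n → ℤ) (i : Fin n) : (q i).natAbs ≤ znn q :=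
  le_sup (f := fun i => (q i).natAbs) (mem_univ i)

theorem znn_add_le {n : ℕ} (p q : Fin n → ℤ) : znn (p + q) ≤ znn p + znn q :=
  Finset.sup_le fun i _ =>
    (Int.natAbs_add_le _ _).trans (add_le_add (natAbs_le_znn p i) (natAbs_le_znn q i))

theorem znn_sub_le {n : ℕ} (p q : Fin n → ℤ) : znn (p - q) ≤ znn p + znn q :=
  Finset.sup_le fun i _ =>
    (Int.natAbs_sub_le _ _).trans (add_le_add (natAbs_le_znn p i) (natAbs_le_znn q i))

theorem znn_sum_le {ι : Type*} {n : ℕ} (s : Finset ι) (q : ι → Fin n → ℤ) :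
    znn (∑ k ∈ s, q k) ≤ ∑ k ∈ s, znn (q k) :=
  le_sum_of_subadditive znn znn_zero.le znn_add_le s q

theorem dz_le {m : ℕ} (y : Fin m → ℝ) (p : Fin m → ℤ) : dz y ≤ ‖y - fun i => (p i : ℝ)‖ :=
  ciInf_le ⟨0, fun _ ⟨_, hp⟩ => hp ▸ norm_nonneg _⟩ p

theorem dz_le_norm {m : ℕ} (y : Fin m → ℝ) : dz y ≤ ‖y‖ := by
  refine (dz_le y 0).trans_eq ?_
  congr 1
  ext i
  simp

theorem dz_add_intCast {m : ℕ} (y : Fin m → ℝ) (c : Fin m → ℤ) :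
    dz (y + fun i => (c i : ℝ)) = dz y := by
  refine le_antisymm (le_ciInf fun p => ?_) (le_ciInf fun p => ?_)
  · refine (dz_le _ (p + c)).trans_eq ?_
    congr 1; ext i; simp only [Pi.add_apply, Pi.sub_apply]; push_cast; ring
  · refine (dz_le _ (p - c)).trans_eq ?_
    congr 1; ext i; simp only [Pi.add_apply, Pi.sub_apply]; push_cast; ring

noncomputable def roundResidue {m : ℕ} (y : Fin m → ℝ) : Fin m → ℝ :=
  y - fun i => (round (y i) : ℝ)

theorem dz_eq_norm_roundResidue {m : ℕ} (y : Fin m → ℝ) : dz y = ‖roundResidue y‖ := by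
  refine le_antisymm (dz_le y _) (le_ciInf fun p => ?_)
  refine pi_norm_le_iff_of_nonneg (norm_nonneg _) |>.2 fun i => ?_
  calc ‖roundResidue y i‖ = |y i - round (y i)| := rfl
    _ ≤ |y i - p i| := round_le (y i) (p i)
    _ = ‖(y - fun i => (p i : ℝ)) i‖ := rfl
    _ ≤ ‖y - fun i => (p i : ℝ)‖ := norm_le_pi_norm _ i

theorem dz_sum_range_sub_fract_tsum_le {m : ℕ} {v : ℕ → Fin m → ℝ}
    (hv : Summable fun k => ‖roundResidue (v k)‖) (K : ℕ) :
    dz (∑ k ∈ range K, v k - fun i => Int.fract ((∑' k, roundResidue (v k)) i)) ≤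
      ∑' j, ‖roundResidue (v (j + K))‖ := by
  set r := fun k => roundResidue (v k)
  have htail := (hv.of_norm).sum_add_tsum_nat_add K
  have hsplit : ∑ k ∈ range K, v k - (fun i => Int.fract ((∑' k, r k) i)) =
      -(∑' j, r (j + K)) + fun i => ((∑ k ∈ range K, round (v k i) + ⌊(∑' k, r k) i⌋ : ℤ) : ℝ) := by
    ext i
    have hi := congrFun htail i
    simp only [Pi.add_apply, Finset.sum_apply] at hi
    simp only [Pi.add_apply, Pi.sub_apply, Pi.neg_apply, Finset.sum_apply, Int.fract]
    push_cast
    rw [← hi]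
    simp only [r, roundResidue, Pi.sub_apply, sum_sub_distrib]
    ring
  rw [hsplit, dz_add_intCast]
  calc dz (-∑' j, r (j + K)) ≤ ‖∑' j, r (j + K)‖ := (dz_le_norm _).trans_eq (norm_neg _)
    _ ≤ ∑' j, ‖r (j + K)‖ := norm_tsum_le_tsum_norm ((summable_nat_add_iff K).2 hv)

section Lacunary

variable {n : ℕ} {Q : ℕ → Fin n → ℤ}

theorem znn_le_znn_sum_range_succ_add (K : ℕ) :
    znn (Q K) ≤ znn (∑ k ∈ range (K + 1), Q k) + znn (∑ k ∈ range K, Q k) := by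
  rw [← sum_range_succ_sub_sum Q]
  exact znn_sub_le _ _

theorem le_znn_sum_range (hQ : IsLacunary fun k => znn (Q k)) (K : ℕ) :
    K ≤ znn (∑ k ∈ range K, Q k) := by
  cases K with
  | zero => exact Nat.zero_le _
  | succ K =>
    have := znn_le_znn_sum_range_succ_add (Q := Q) K
    have := znn_sum_le (range K) Q
    have := hQ.two_mul_sum_add_lt K
    omega

theorem monotone_znn_sum_range (hQ : IsLacunary fun k => znn (Q k)) :
    Monotone fun K => znn (∑ k ∈ range K, Q k) := by
  refine monotone_nat_of_le_succ fun K => ?_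
  have := znn_le_znn_sum_range_succ_add (Q := Q) K
  have := znn_sum_le (range K) Q
  have := hQ.two_mul_sum_add_lt K
  omega

theorem znn_sum_range_succ_le (hQ : IsLacunary fun k => znn (Q k))
    (K : ℕ) : znn (∑ k ∈ range (K + 1), Q k) ≤ 2 * znn (Q K) := by
  have hsum := znn_sum_le (range (K + 1)) Q
  rw [sum_range_succ (fun k => znn (Q k))] at hsum
  have := hQ.two_mul_sum_add_lt K
  omega

theorem monotone_znn_of_lacunary (hQ : IsLacunary fun k => znn (Q k)) :
    Monotone fun k => znn (Q k) := by
  refine monotone_nat_of_le_succ fun k => ?_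
  have := hQ.two_mul_sum_add_lt (k + 1)
  rw [sum_range_succ] at this
  omega

end Lacunary

open Matrix

section Diophantine

variable {m n : ℕ} (A : Matrix (Fin m) (Fin n) ℝ) {Q : ℕ → Fin n → ℤ}

theorem approxErr_zero_eq (q : Fin n → ℤ) :
    approxErr A 0 q = ‖roundResidue (A *ᵥ fun i => (q i : ℝ))‖ := by
  rw [approxErr, sub_zero, dz_eq_norm_roundResidue]

theorem approxErr_sum_range_le
    (hQ : Summable fun k => ‖roundResidue (A *ᵥ fun i => (Q k i : ℝ))‖) (K : ℕ) :
    approxErr A (fun i => Int.fract ((∑' k, roundResidue (A *ᵥ fun i => (Q k i : ℝ))) i))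
        (∑ k ∈ range K, Q k) ≤
      ∑' j, ‖roundResidue (A *ᵥ fun i => (Q (j + K) i : ℝ))‖ := by
  have hcast : (fun i => ((∑ k ∈ range K, Q k) i : ℝ)) = ∑ k ∈ range K, fun i => (Q k i : ℝ) := by
    ext i
    simp
  rw [approxErr, hcast, mulVec_sum]
  exact dz_sum_range_sub_fract_tsum_le hQ K

theorem norm_roundResidue_lt {q : Fin n → ℤ} (hq : 0 < znn q) {ε : ℝ}
    (hε : 0 ≤ ε) (hqA : (znn q : ℝ) ^ n * approxErr A 0 q ^ m < ε ^ m) :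
    ‖roundResidue (A *ᵥ fun i => (q i : ℝ))‖ < ε := by
  rw [← approxErr_zero_eq]
  refine lt_of_pow_lt_pow_left₀ m hε (lt_of_le_of_lt ?_ hqA)
  have : (1 : ℝ) ≤ (znn q : ℝ) ^ n := one_le_pow₀ (by exact_mod_cast hq)
  have : 0 ≤ approxErr A 0 q := by rw [approxErr_zero_eq]; exact norm_nonneg _
  nlinarith [pow_nonneg this m]

theorem summable_norm_roundResidue (hQ : IsLacunary fun k => znn (Q k))
    (hQA : ∀ k, (znn (Q k) : ℝ) ^ n * approxErr A 0 (Q k) ^ m < ((1 / 2) ^ k) ^ m) :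
    Summable fun k => ‖roundResidue (A *ᵥ fun i => (Q k i : ℝ))‖ :=
  .of_nonneg_of_le (fun _ => norm_nonneg _)
    (fun k => (norm_roundResidue_lt A (by have := hQ.two_mul_sum_add_lt k; omega)
      (by positivity) (hQA k)).le)
    summable_geometric_two

theorem znn_pow_mul_tsum_pow_le (hm : m ≠ 0)
    (hQ : IsLacunary fun k => znn (Q k))
    (hQA : ∀ k, (znn (Q k) : ℝ) ^ n * approxErr A 0 (Q k) ^ m < ((1 / 2) ^ k) ^ m) (K : ℕ) :
    (znn (Q K) : ℝ) ^ n * (∑' j, ‖roundResidue (A *ᵥ fun i => (Q (j + K) i : ℝ))‖) ^ m ≤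
      (2 * (1 / 2) ^ K) ^ m := by
  have hgeom : ∑' j : ℕ, ((1 : ℝ) / 2) ^ (j + K) = 2 * (1 / 2) ^ K := by
    simp_rw [pow_add]
    rw [tsum_mul_right, tsum_geometric_two]
  rw [← hgeom]
  refine mul_tsum_pow_le_tsum_pow hm (by positivity) (fun _ => norm_nonneg _)
    (fun _ => by positivity)
    ((summable_nat_add_iff K).2 (summable_norm_roundResidue A hQ hQA))
    ((summable_nat_add_iff K).2 summable_geometric_two) fun j => ?_
  calc (znn (Q K) : ℝ) ^ n * ‖roundResidue (A *ᵥ fun i => (Q (j + K) i : ℝ))‖ ^ m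
      ≤ (znn (Q (j + K)) : ℝ) ^ n * approxErr A 0 (Q (j + K)) ^ m := by
        rw [approxErr_zero_eq]
        gcongr
        exact monotone_znn_of_lacunary hQ (Nat.le_add_left K j)
    _ ≤ ((1 / 2) ^ (j + K)) ^ m := (hQA _).le

theorem znn_sum_range_succ_pow_mul_tsum_pow_le (hm : m ≠ 0)
    (hQ : IsLacunary fun k => znn (Q k))
    (hQA : ∀ k, (znn (Q k) : ℝ) ^ n * approxErr A 0 (Q k) ^ m < ((1 / 2) ^ k) ^ m) (K : ℕ) :
    (znn (∑ k ∈ range (K + 1), Q k) : ℝ) ^ n *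
        (∑' j, ‖roundResidue (A *ᵥ fun i => (Q (j + K) i : ℝ))‖) ^ m ≤
      2 ^ n * (2 * (1 / 2) ^ K) ^ m := by
  calc (znn (∑ k ∈ range (K + 1), Q k) : ℝ) ^ n *
        (∑' j, ‖roundResidue (A *ᵥ fun i => (Q (j + K) i : ℝ))‖) ^ m
      ≤ ((2 * znn (Q K) : ℕ) : ℝ) ^ n *
        (∑' j, ‖roundResidue (A *ᵥ fun i => (Q (j + K) i : ℝ))‖) ^ m := by
        gcongr
        exact znn_sum_range_succ_le hQ K
    _ = 2 ^ n * ((znn (Q K) : ℝ) ^ n *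
        (∑' j, ‖roundResidue (A *ᵥ fun i => (Q (j + K) i : ℝ))‖) ^ m) := by
        push_cast
        ring
    _ ≤ 2 ^ n * (2 * (1 / 2) ^ K) ^ m := by
        gcongr
        exact znn_pow_mul_tsum_pow_le A hm hQ hQA K

end Diophantine

theorem not_bad_implies_omega_fiber_nonempty_general (m n : ℕ) (hm : 0 < m) (hn : 0 < n)
    (A : Matrix (Fin m) (Fin n) ℝ)
    (hnotbad : ∀ ε : ℝ, 0 < ε → ∀ N : ℕ, ∃ q : Fin n → ℤ,
      N ≤ znn q ∧ (znn q : ℝ) ^ n * approxErr A 0 q ^ m < ε) :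
    ∃ γ : Fin m → ℝ, (∀ i, 0 ≤ γ i ∧ γ i < 1) ∧
      ∀ ψ : ℕ → ℝ, Antitone ψ → (∀ q, 0 ≤ ψ q) →
        ¬ Summable (fun q : ℕ => (q : ℝ) ^ (n - 1) * ψ q ^ m) →
        {q : Fin n → ℤ | approxErr A γ q < ψ (znn q)}.Infinite := by
  obtain ⟨Q, hQ_lac, hQA⟩ := exists_seq_isLacunary znn
    (fun k q => (znn q : ℝ) ^ n * approxErr A 0 q ^ m < ((1 / 2) ^ k) ^ m)
    fun k N => hnotbad _ (by positivity) N
  refine ⟨fun i => Int.fract ((∑' k, roundResidue (A *ᵥ fun i => (Q k i : ℝ))) i),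
    fun i => ⟨Int.fract_nonneg _, Int.fract_lt_one _⟩, fun ψ hψ hψ_nonneg hdiv => ?_⟩
  by_contra hfin
  obtain ⟨M, hM⟩ := ((Set.not_infinite.1 hfin).image znn).bddAbove
  refine hdiv (summable_of_sum_Ico_le (fun q => by have := hψ_nonneg q; positivity)
    (monotone_znn_sum_range hQ_lac) (le_znn_sum_range hQ_lac)
    (c := fun K => 2 ^ n * 2 ^ m * ((1 / 2 : ℝ) ^ m) ^ K) (fun K => by positivity)
    ((summable_geometric_of_lt_one (by positivity)
      (pow_lt_one₀ (by norm_num) (by norm_num) hm.ne')).mul_left _)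
    (M := M + 1) fun K hK => ?_)
  -- for `K > M` the `K`-th partial sum of `Q` is too long to be one of the finitely many good `q`
  have hψK : ψ (znn (∑ k ∈ range K, Q k)) ≤
      ∑' j, ‖roundResidue (A *ᵥ fun i => (Q (j + K) i : ℝ))‖ := by
    by_contra! hlt
    have := hM ⟨_, (approxErr_sum_range_le A (summable_norm_roundResidue A hQ_lac hQA) K).trans_lt
      hlt, rfl⟩
    have := le_znn_sum_range hQ_lac K
    omega
  calc _ ≤ _ := sum_Ico_pow_mul_pow_le hψ hψ_nonneg hn m hψK
    _ ≤ 2 ^ n * (2 * (1 / 2) ^ K) ^ m :=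
        znn_sum_range_succ_pow_mul_tsum_pow_le A hm.ne' hQ_lac hQA K
    _ = 2 ^ n * 2 ^ m * ((1 / 2) ^ m) ^ K := by ring

theorem not_bad_implies_omega_fiber_nonempty (m n : ℕ) (hm : 0 < m) (hn : 0 < n)
    (A : Matrix (Fin m) (Fin n) ℝ) (hA : ∀ i j, 0 ≤ A i j ∧ A i j < 1)
    (hnotbad : ∀ ε : ℝ, 0 < ε → ∀ N : ℕ, ∃ q : Fin n → ℤ,
      N ≤ znn q ∧ (znn q : ℝ) ^ n * approxErr A 0 q ^ m < ε) :
    ∃ γ : Fin m → ℝ, (∀ i, 0 ≤ γ i ∧ γ i < 1) ∧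
      ∀ ψ : ℕ → ℝ, Antitone ψ → (∀ q, 0 ≤ ψ q) →
        ¬ Summable (fun q : ℕ => (q : ℝ) ^ (n - 1) * ψ q ^ m) →
        {q : Fin n → ℤ | approxErr A γ q < ψ (znn q)}.Infinite :=
  not_bad_implies_omega_fiber_nonempty_general m n hm hn A hnotbad
end

section
/- Fix positive integers m,n, A ∈ [0,1)^{m×n} and γ ∈ [0,1)^m with liminf_{‖q‖→∞} ‖q‖^n ⟨Aq − γ⟩^m = 0. Then the set 𝒞(A,γ) = {ψ ∈ 𝒞 : ⟨Aq − γ⟩ < ψ(‖q‖) for infinitely many q ∈ ℤ^n} is dense in the metric space (𝒞,d): for every ψ ∈ 𝒞 and ε > 0 there exists φ ∈ 𝒞(A,γ) with d(φ,ψ) < ε. -/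
open Filter

/-- Membership in the set `𝒞` of decreasing functions `ψ : ℕ → [0,∞)` with
`∑ q^{n-1} ψ(q)^m < ∞`. -/
def memC (m n : ℕ) (ψ : ℕ → ℝ) : Prop :=
  Antitone ψ ∧ (∀ q, 0 ≤ ψ q) ∧ Summable (fun q : ℕ => (q : ℝ) ^ (n - 1) * ψ q ^ m)

/-- The metric `d(ψ₁,ψ₂) = ∑ q^{n-1} |ψ₁(q)^m - ψ₂(q)^m|` on `𝒞`. -/
noncomputable def Cd (m n : ℕ) (ψ₁ ψ₂ : ℕ → ℝ) : ℝ :=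
  ∑' q : ℕ, (q : ℝ) ^ (n - 1) * |ψ₁ q ^ m - ψ₂ q ^ m|

theorem CAgamma_dense (m n : ℕ) (hm : 0 < m) (hn : 0 < n)
    (A : Matrix (Fin m) (Fin n) ℝ) (γ : Fin m → ℝ)
    (hA : ∀ i j, 0 ≤ A i j ∧ A i j < 1) (hγ : ∀ i, 0 ≤ γ i ∧ γ i < 1)
    (hliminf : ∀ ε : ℝ, 0 < ε → ∀ N : ℕ, ∃ q : Fin n → ℤ,
      N ≤ znn q ∧ (znn q : ℝ) ^ n * approxErr A γ q ^ m < ε) :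
    ∀ ψ : ℕ → ℝ, memC m n ψ → ∀ ε : ℝ, 0 < ε →
      ∃ φ : ℕ → ℝ, memC m n φ ∧
        {q : Fin n → ℤ | approxErr A γ q < φ (znn q)}.Infinite ∧
        Cd m n φ ψ < ε := by
  intro ψ hψ ε hε
  -- the small budget sequence
  set E : ℕ → ℝ := fun k => (ε / 16) * (1 / 2 : ℝ) ^ k with hE_def
  have hEpos : ∀ k, 0 < E k := fun k => by positivity
  have hsE : Summable E := (summable_geometric_two).mul_left _
  have htE : ∑' k, E k = ε / 8 := by
    rw [hE_def, tsum_mul_left, tsum_geometric_two]; ring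
  -- choose good approximation vectors
  have H : ∀ k N : ℕ, ∃ q : Fin n → ℤ,
      N ≤ znn q ∧ (znn q : ℝ) ^ n * approxErr A γ q ^ m < E k :=
    fun k N => hliminf (E k) (hEpos k) N
  choose f hf1 hf2 using H
  set s : ℕ → (Fin n → ℤ) :=
    fun k => Nat.rec (f 0 1) (fun k prev => f (k + 1) (znn prev + 1)) k with hs_def
  set Q : ℕ → ℕ := fun k => znn (s k) with hQ_def
  have hQsucc : ∀ k, Q k + 1 ≤ Q (k + 1) := fun k => hf1 (k + 1) (znn (s k) + 1)
  have hQ1 : ∀ k, 1 ≤ Q k := by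
    intro k
    induction k with
    | zero => exact hf1 0 1
    | succ k ih => exact le_trans (le_trans ih (Nat.le_succ _)) (hQsucc k)
  have hQmono : StrictMono Q :=
    strictMono_nat_of_lt_succ fun k => lt_of_lt_of_le (Nat.lt_succ_self _) (hQsucc k)
  have herr : ∀ k, (Q k : ℝ) ^ n * approxErr A γ (s k) ^ m < E k := by
    intro k
    cases k with
    | zero => exact hf2 0 1
    | succ k => exact hf2 (k + 1) (znn (s k) + 1)
  have hQpos : ∀ k, (0 : ℝ) < (Q k : ℝ) ^ n := fun k => by
    have := hQ1 k; positivity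
  have hQ1R : ∀ k, (1 : ℝ) ≤ (Q k : ℝ) ^ n := fun k =>
    one_le_pow₀ (by exact_mod_cast hQ1 k)
  -- bump heights
  set c : ℕ → ℝ := fun k => 2 * E k / (Q k : ℝ) ^ n with hc_def
  have hcpos : ∀ k, 0 < c k := fun k => div_pos (by linarith [hEpos k]) (hQpos k)
  have hcle : ∀ k, c k ≤ 2 * E k := fun k => by
    rw [hc_def]
    exact div_le_self (by linarith [hEpos k]) (hQ1R k)
  -- the bump function (m-th power)
  set g : ℕ → ℕ → ℝ := fun k r => if r ≤ Q k then c k else 0 with hg_def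
  have hgnn : ∀ k r, 0 ≤ g k r := by
    intro k r; simp only [hg_def]; split <;> [exact (hcpos k).le; exact le_rfl]
  have hgle : ∀ k r, g k r ≤ c k := by
    intro k r; simp only [hg_def]; split <;> [exact le_rfl; exact (hcpos k).le]
  have hgsum : ∀ r, Summable fun k => g k r := by
    intro r
    exact Summable.of_nonneg_of_le (fun k => hgnn k r)
      (fun k => (hgle k r).trans (hcle k)) (hsE.mul_left 2)
  set δm : ℕ → ℝ := fun r => ∑' k, g k r with hδm_def
  have hδmnn : ∀ r, 0 ≤ δm r := fun r => tsum_nonneg fun k => hgnn k r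
  have hδmanti : Antitone δm := by
    intro r r' hrr'
    refine Summable.tsum_le_tsum (fun k => ?_) (hgsum r') (hgsum r)
    simp only [hg_def]
    split
    · rw [if_pos (le_trans hrr' (by assumption))]
    · split
      · exact (hcpos k).le
      · exact le_rfl
  have hδmge : ∀ j, c j ≤ δm (Q j) := by
    intro j
    have := Summable.le_tsum (hgsum (Q j)) j (fun k _ => hgnn k (Q j))
    simpa only [hg_def, le_refl, if_true] using this
  -- summability over the product and cost bound
  set F : ℕ × ℕ → ℝ := fun p => (p.2 : ℝ) ^ (n - 1) * g p.1 p.2 with hF_def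
  have hFnn : ∀ p, 0 ≤ F p := fun p => mul_nonneg (by positivity) (hgnn p.1 p.2)
  have hfibsum : ∀ k, Summable fun r => F (k, r) := by
    intro k
    apply summable_of_finite_support
    apply Set.Finite.subset (Set.finite_Icc 0 (Q k))
    intro r hr
    simp only [Function.mem_support, hF_def] at hr
    by_contra hmem
    simp only [Set.mem_Icc, not_and, Nat.le_zero] at hmem
    have : ¬ r ≤ Q k := fun h => hmem (Nat.zero_le r) h
    apply hr
    rw [hg_def]; simp only [this, if_false, mul_zero]
  have hfibbound : ∀ k, ∑' r, F (k, r) ≤ 4 * E k := by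
    intro k
    have heq : ∑' r, F (k, r) = ∑ r ∈ Finset.range (Q k + 1), F (k, r) := by
      refine tsum_eq_sum fun r hr => ?_
      have : ¬ r ≤ Q k := fun h => hr (Finset.mem_range.mpr (Nat.lt_succ_of_le h))
      simp only [hF_def, hg_def, this, if_false, mul_zero]
    rw [heq]
    have hbound : ∀ r ∈ Finset.range (Q k + 1), F (k, r) ≤ (Q k : ℝ) ^ (n - 1) * c k := by
      intro r hr
      have hrQ : (r : ℝ) ≤ (Q k : ℝ) := by
        exact_mod_cast Nat.lt_succ_iff.mp (Finset.mem_range.mp hr)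
      exact mul_le_mul (pow_le_pow_left₀ (by positivity) hrQ _) (hgle k r)
        (hgnn k r) (by positivity)
    calc ∑ r ∈ Finset.range (Q k + 1), F (k, r)
        ≤ (Q k + 1) • ((Q k : ℝ) ^ (n - 1) * c k) := by
          have := Finset.sum_le_card_nsmul (Finset.range (Q k + 1)) _ _ hbound
          rwa [Finset.card_range] at this
      _ = ((Q k : ℝ) + 1) * ((Q k : ℝ) ^ (n - 1) * c k) := by
          rw [nsmul_eq_mul]; push_cast; ring
      _ ≤ (2 * (Q k : ℝ)) * ((Q k : ℝ) ^ (n - 1) * c k) := by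
          have h1 : (1 : ℝ) ≤ (Q k : ℝ) := by exact_mod_cast hQ1 k
          have h2 : (0 : ℝ) ≤ (Q k : ℝ) ^ (n - 1) * c k :=
            mul_nonneg (by positivity) (hcpos k).le
          nlinarith
      _ = 2 * (Q k : ℝ) ^ n * c k := by
          have : (Q k : ℝ) ^ (n - 1) * (Q k : ℝ) = (Q k : ℝ) ^ n := by
            rw [← pow_succ, Nat.sub_add_cancel hn]
          rw [← this]; ring
      _ = 4 * E k := by
          have key : ∀ x e : ℝ, x ≠ 0 → 2 * x * (2 * e / x) = 4 * e := by
            intro x e hx; field_simp; ring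
          rw [hc_def]; exact key _ _ (hQpos k).ne'
  have hfibtsum_sum : Summable fun k => ∑' r, F (k, r) :=
    Summable.of_nonneg_of_le (fun k => tsum_nonneg fun r => hFnn (k, r))
      hfibbound (hsE.mul_left 4)
  have hFsum : Summable F :=
    (summable_prod_of_nonneg hFnn).mpr ⟨hfibsum, hfibtsum_sum⟩
  have hFswap := hFsum.prod_symm
  have hcolsum : Summable fun r => ∑' k, F (k, r) :=
    ((summable_prod_of_nonneg (f := fun p : ℕ × ℕ => F p.swap)
      (fun p => hFnn p.swap)).mp hFswap).2
  have hcol_eq : ∀ r, ∑' k, F (k, r) = (r : ℝ) ^ (n - 1) * δm r := by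
    intro r
    rw [hδm_def, ← tsum_mul_left]
  have hcost_sum : Summable fun r : ℕ => (r : ℝ) ^ (n - 1) * δm r := by
    refine hcolsum.congr fun r => hcol_eq r
  have hcost : ∑' r : ℕ, (r : ℝ) ^ (n - 1) * δm r ≤ ε / 2 := by
    have h1 : ∑' r : ℕ, (r : ℝ) ^ (n - 1) * δm r = ∑' (r : ℕ) (k : ℕ), F (k, r) := by
      refine tsum_congr fun r => (hcol_eq r).symm
    have h2 : ∑' (r : ℕ) (k : ℕ), F (k, r) = ∑' (k : ℕ) (r : ℕ), F (k, r) :=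
      Summable.tsum_comm (f := fun k r => F (k, r)) hFsum
    rw [h1, h2]
    calc ∑' (k : ℕ) (r : ℕ), F (k, r) ≤ ∑' k, 4 * E k :=
          Summable.tsum_le_tsum hfibbound hfibtsum_sum (hsE.mul_left 4)
      _ = 4 * (ε / 8) := by rw [tsum_mul_left, htE]
      _ = ε / 2 := by ring
  -- the bump function and the perturbed ψ
  set δ : ℕ → ℝ := fun r => (δm r) ^ ((m : ℝ)⁻¹) with hδ_def
  have hδnn : ∀ r, 0 ≤ δ r := fun r => Real.rpow_nonneg (hδmnn r) _
  have hδpow : ∀ r, δ r ^ m = δm r := by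
    intro r
    rw [hδ_def, ← Real.rpow_natCast ((δm r) ^ ((m : ℝ)⁻¹)) m,
      ← Real.rpow_mul (hδmnn r), inv_mul_cancel₀ (by exact_mod_cast hm.ne'),
      Real.rpow_one]
  have hδanti : Antitone δ := fun r r' h =>
    Real.rpow_le_rpow (hδmnn r') (hδmanti h) (by positivity)
  set φ : ℕ → ℝ := fun r => max (ψ r) (δ r) with hφ_def
  have hφnn : ∀ r, 0 ≤ φ r := fun r => le_trans (hψ.2.1 r) (le_max_left _ _)
  have hφpow_le : ∀ r, φ r ^ m ≤ ψ r ^ m + δm r := by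
    intro r
    rcases max_choice (ψ r) (δ r) with h | h <;> rw [hφ_def] <;> simp only [h]
    · nlinarith [hδmnn r]
    · rw [hδpow r]
      nlinarith [pow_nonneg (hψ.2.1 r) m]
  have hφge : ∀ r, ψ r ^ m ≤ φ r ^ m := fun r =>
    pow_le_pow_left₀ (hψ.2.1 r) (le_max_left _ _) m
  refine ⟨φ, ⟨hψ.1.max hδanti, hφnn, ?_⟩, ?_, ?_⟩
  · -- summability
    refine Summable.of_nonneg_of_le (fun r => mul_nonneg (by positivity)
      (pow_nonneg (hφnn r) m)) (fun r => ?_) (hψ.2.2.add hcost_sum)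
    calc (r : ℝ) ^ (n - 1) * φ r ^ m
        ≤ (r : ℝ) ^ (n - 1) * (ψ r ^ m + δm r) := by
          exact mul_le_mul_of_nonneg_left (hφpow_le r) (by positivity)
      _ = (r : ℝ) ^ (n - 1) * ψ r ^ m + (r : ℝ) ^ (n - 1) * δm r := by ring
  · -- infinitely many solutions
    refine Set.infinite_of_injective_forall_mem (f := s) ?_ ?_
    · intro k k' hkk'
      exact hQmono.injective (by rw [hQ_def]; simp only [hkk'])
    · intro k
      have herrnn : 0 ≤ approxErr A γ (s k) :=
        Real.iInf_nonneg fun p => norm_nonneg _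
      have h1 : approxErr A γ (s k) ^ m < c k := by
        rw [hc_def]
        rw [lt_div_iff₀ (hQpos k)]
        calc approxErr A γ (s k) ^ m * (Q k : ℝ) ^ n
            = (Q k : ℝ) ^ n * approxErr A γ (s k) ^ m := by ring
          _ < E k := herr k
          _ ≤ 2 * E k := by linarith [hEpos k]
      have h2 : approxErr A γ (s k) ^ m < φ (Q k) ^ m := by
        refine lt_of_lt_of_le h1 ?_
        calc c k ≤ δm (Q k) := hδmge k
          _ = δ (Q k) ^ m := (hδpow _).symm
          _ ≤ φ (Q k) ^ m := pow_le_pow_left₀ (hδnn _) (le_max_right _ _) m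
      show approxErr A γ (s k) < φ (znn (s k))
      by_contra hcon
      push_neg at hcon
      exact absurd (pow_le_pow_left₀ (hφnn (znn (s k))) hcon m) (not_le.mpr h2)
  · -- distance bound
    have hterm : ∀ r : ℕ, (r : ℝ) ^ (n - 1) * |φ r ^ m - ψ r ^ m|
        ≤ (r : ℝ) ^ (n - 1) * δm r := by
      intro r
      refine mul_le_mul_of_nonneg_left ?_ (by positivity)
      rw [abs_of_nonneg (by linarith [hφge r])]
      linarith [hφpow_le r]
    have hCd_sum : Summable fun r : ℕ => (r : ℝ) ^ (n - 1) * |φ r ^ m - ψ r ^ m| :=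
      Summable.of_nonneg_of_le (fun r => mul_nonneg (by positivity) (abs_nonneg _))
        hterm hcost_sum
    calc Cd m n φ ψ ≤ ∑' r : ℕ, (r : ℝ) ^ (n - 1) * δm r :=
          Summable.tsum_le_tsum hterm hCd_sum hcost_sum
      _ ≤ ε / 2 := hcost
      _ < ε := by linarith
end

section
/- Fix positive integers m,n, A ∈ [0,1)^{m×n} and γ ∈ [0,1)^m. Then the interior of the set 𝒞(A,γ) = {ψ ∈ 𝒞 : ⟨Aq − γ⟩ < ψ(‖q‖) for infinitely many q ∈ ℤ^n} in the metric space (𝒞,d) is empty: for every ψ ∈ 𝒞(A,γ) and every ε > 0 there exists φ ∈ 𝒞 \ 𝒞(A,γ) with d(φ,ψ) < ε. -/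
open Filter

theorem CAgamma_empty_interior (m n : ℕ) (hm : 0 < m) (hn : 0 < n)
    (A : Matrix (Fin m) (Fin n) ℝ) (γ : Fin m → ℝ)
    (hA : ∀ i j, 0 ≤ A i j ∧ A i j < 1) (hγ : ∀ i, 0 ≤ γ i ∧ γ i < 1) :
    ∀ ψ : ℕ → ℝ, memC m n ψ →
      {q : Fin n → ℤ | approxErr A γ q < ψ (znn q)}.Infinite →
      ∀ ε : ℝ, 0 < ε →
        ∃ φ : ℕ → ℝ, memC m n φ ∧
          ¬ {q : Fin n → ℤ | approxErr A γ q < φ (znn q)}.Infinite ∧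
          Cd m n φ ψ < ε := by
  intro ψ hψ _hinf ε hε
  obtain ⟨hanti, hnonneg, hsum⟩ := hψ
  set f : ℕ → ℝ := fun q => (q : ℝ) ^ (n - 1) * ψ q ^ m with hf
  have hf0 : ∀ q, 0 ≤ f q := fun q =>
    mul_nonneg (by positivity) (pow_nonneg (hnonneg q) m)
  have htail : Tendsto (fun N => ∑' k, f (k + N)) atTop (nhds 0) :=
    tendsto_sum_nat_add f
  obtain ⟨N, hN⟩ := (htail.eventually (gt_mem_nhds hε)).exists
  set φ : ℕ → ℝ := fun q => if q < N then ψ q else 0 with hφ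
  have hφnn : ∀ q, 0 ≤ φ q := by
    intro q; simp only [hφ]; split_ifs; exacts [hnonneg q, le_refl 0]
  -- the term function for φ
  have hterm : ∀ q : ℕ, (q : ℝ) ^ (n - 1) * φ q ^ m = if q < N then f q else 0 := by
    intro q; simp only [hφ]
    split_ifs with h
    · rfl
    · rw [zero_pow hm.ne', mul_zero]
  have hg2 : ∀ q, (0:ℝ) ≤ (if q < N then 0 else f q) := by
    intro q; split_ifs; exacts [le_refl 0, hf0 q]
  have hg2sum : Summable (fun q => if q < N then 0 else f q) := by
    apply Summable.of_nonneg_of_le hg2 _ hsum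
    intro q; split_ifs; exacts [hf0 q, le_refl _]
  have hg1sum : Summable (fun q => if q < N then f q else 0) := by
    apply Summable.of_nonneg_of_le _ _ hsum
    · intro q; split_ifs; exacts [hf0 q, le_refl 0]
    · intro q; split_ifs; exacts [le_refl _, hf0 q]
  have hg1tsum : ∑' q, (if q < N then f q else 0) = ∑ q ∈ Finset.range N, f q := by
    rw [tsum_eq_sum (s := Finset.range N) (by intro b hb; simp [Finset.mem_range] at hb; simp [hb])]
    exact Finset.sum_congr rfl (by intro b hb; simp [Finset.mem_range] at hb; simp [hb])
  have hsplit : ∑' q, f q = ∑ q ∈ Finset.range N, f q + ∑' q, f (q + N) :=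
    (Summable.sum_add_tsum_nat_add N hsum).symm
  have hdecomp : ∑' q, f q =
      ∑' q, (if q < N then f q else 0) + ∑' q, (if q < N then 0 else f q) := by
    rw [← Summable.tsum_add hg1sum hg2sum]
    congr 1; funext q; split_ifs <;> ring
  have htailval : ∑' q, (if q < N then 0 else f q) = ∑' q, f (q + N) := by
    rw [hg1tsum] at hdecomp; linarith [hsplit, hdecomp]
  refine ⟨φ, ⟨?_, hφnn, ?_⟩, ?_, ?_⟩
  · -- Antitone
    intro a b hab
    simp only [hφ]
    split_ifs with h1 h2 h2
    · exact hanti hab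
    · exact absurd (lt_of_le_of_lt hab h1) h2
    · exact hnonneg a
    · exact le_refl 0
  · -- Summable
    apply Summable.of_nonneg_of_le _ _ hsum
    · intro q; exact mul_nonneg (by positivity) (pow_nonneg (hφnn q) m)
    · intro q; rw [hterm q]; split_ifs; exacts [le_refl _, hf0 q]
  · -- Finitely many solutions
    intro hinf
    have happ : ∀ q : Fin n → ℤ, 0 ≤ approxErr A γ q := fun q =>
      Real.iInf_nonneg (fun p => norm_nonneg _)
    have hsub : {q : Fin n → ℤ | approxErr A γ q < φ (znn q)} ⊆
        Set.pi Set.univ (fun _ : Fin n => Set.Icc (-(N:ℤ)) N) := by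
      intro q hq
      have hlt : znn q < N := by
        by_contra h
        have : φ (znn q) = 0 := by simp [hφ, h]
        rw [Set.mem_setOf_eq, this] at hq
        exact absurd hq (not_lt.mpr (happ q))
      intro i _
      have h1 : (q i).natAbs ≤ znn q := by unfold znn; exact Finset.le_sup (f := fun j => (q j).natAbs) (Finset.mem_univ i)
      have h2 : ((q i).natAbs : ℤ) ≤ N := by exact_mod_cast le_of_lt (lt_of_le_of_lt h1 hlt)
      have h3 : |q i| ≤ (N : ℤ) := by rw [Int.abs_eq_natAbs]; exact h2
      exact Set.mem_Icc.mpr (abs_le.mp h3)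
    exact hinf (Set.Finite.subset (Set.Finite.pi (fun _ => Set.finite_Icc _ _)) hsub)
  · -- distance small
    have hCd : Cd m n φ ψ = ∑' q, (if q < N then 0 else f q) := by
      unfold Cd
      congr 1; funext q
      simp only [hφ]
      split_ifs with h
      · simp
      · rw [zero_pow hm.ne', zero_sub, abs_neg, abs_of_nonneg (pow_nonneg (hnonneg q) m)]
    rw [hCd, htailval]
    exact hN
end

section
/- Let (A_i, γ_i)_{i≥1} be a sequence of pairs with A_i ∈ [0,1)^{m×n}, γ_i ∈ [0,1)^m such that liminf_{‖q‖→∞} ‖q‖^n ⟨A_i q − γ_i⟩^m = 0 for every i. Then there exists a single decreasing function ψ : ℕ → [0,∞) with ∑_{q≥1} q^{n-1} ψ(q)^m < ∞ such that for every i ∈ ℕ there are infinitely many q ∈ ℤ^n with ⟨A_i q − γ_i⟩ < ψ(‖q‖). -/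
open Filter

theorem common_convergent_rate (m n : ℕ) (hm : 0 < m) (hn : 0 < n)
    (A : ℕ → Matrix (Fin m) (Fin n) ℝ) (γ : ℕ → Fin m → ℝ)
    (hA : ∀ i j k, 0 ≤ A i j k ∧ A i j k < 1) (hγ : ∀ i j, 0 ≤ γ i j ∧ γ i j < 1)
    (hliminf : ∀ i : ℕ, ∀ ε : ℝ, 0 < ε → ∀ N : ℕ, ∃ q : Fin n → ℤ,
      N ≤ znn q ∧ (znn q : ℝ) ^ n * approxErr (A i) (γ i) q ^ m < ε) :
    ∃ ψ : ℕ → ℝ, Antitone ψ ∧ (∀ q, 0 ≤ ψ q) ∧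
      Summable (fun q : ℕ => (q : ℝ) ^ (n - 1) * ψ q ^ m) ∧
      ∀ i : ℕ, {q : Fin n → ℤ | approxErr (A i) (γ i) q < ψ (znn q)}.Infinite := by
  classical
  have errnn : ∀ (i : ℕ) (q : Fin n → ℤ), 0 ≤ approxErr (A i) (γ i) q := by
    intro i q
    exact Real.iInf_nonneg fun p => norm_nonneg _
  have hm' : (m : ℝ) ≠ 0 := Nat.cast_ne_zero.mpr hm.ne'
  have hinv : (0 : ℝ) < 1 / (m : ℝ) := by positivity
  -- the key one-step construction
  have key : ∀ (s Q : ℕ) (δ : ℝ), 0 < δ → ∃ (q : Fin n → ℤ) (δ' : ℝ),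
      Q + 1 ≤ znn q ∧ 0 < δ' ∧ δ' ≤ δ ∧
      approxErr (A (Nat.unpair s).1) (γ (Nat.unpair s).1) q < δ' ∧
      (znn q : ℝ) ^ n * δ' ^ m ≤ (1/2 : ℝ) ^ s := by
    intro s Q δ hδ
    set i := (Nat.unpair s).1
    have hε : (0 : ℝ) < min ((1/2 : ℝ) ^ s) (δ ^ m) := lt_min (by positivity) (by positivity)
    obtain ⟨q, hq1, hq2⟩ := hliminf i _ hε (Q + 1)
    set ε := min ((1/2 : ℝ) ^ s) (δ ^ m) with hεdef
    set e := approxErr (A i) (γ i) q with hedef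
    have he : 0 ≤ e := errnn i q
    have hq1' : (1 : ℕ) ≤ znn q := le_trans (by omega) hq1
    set X := (znn q : ℝ) ^ n with hXdef
    have hX1 : (1 : ℝ) ≤ X := one_le_pow₀ (by exact_mod_cast hq1')
    have hX0 : (0 : ℝ) < X := lt_of_lt_of_le one_pos hX1
    have hem : e ^ m < ε / X := by rw [lt_div_iff₀ hX0, mul_comm]; exact hq2
    set c := (e ^ m + ε / X) / 2 with hcdef
    have hc1 : e ^ m < c := by simp only [hcdef]; linarith
    have hc2 : c ≤ ε / X := by simp only [hcdef]; linarith
    have hc0 : (0 : ℝ) < c := lt_of_le_of_lt (pow_nonneg he m) hc1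
    refine ⟨q, c ^ (1 / (m : ℝ)), hq1, Real.rpow_pos_of_pos hc0 _, ?_, ?_, ?_⟩
    · -- δ' ≤ δ
      have hpow : (c ^ (1 / (m : ℝ))) ^ m = c := by
        rw [← Real.rpow_natCast (c ^ (1 / (m : ℝ))) m, ← Real.rpow_mul hc0.le,
          one_div, inv_mul_cancel₀ hm', Real.rpow_one]
      have h1 : (c ^ (1 / (m : ℝ))) ^ m ≤ δ ^ m := by
        rw [hpow]
        calc c ≤ ε / X := hc2
          _ ≤ ε := div_le_self hε.le hX1
          _ ≤ δ ^ m := min_le_right _ _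
      exact (pow_le_pow_iff_left₀ (Real.rpow_pos_of_pos hc0 _).le hδ.le hm.ne').mp h1
    · -- e < δ'
      have h1 : ((e ^ m : ℝ)) ^ (1 / (m : ℝ)) < c ^ (1 / (m : ℝ)) :=
        Real.rpow_lt_rpow (pow_nonneg he m) hc1 hinv
      rwa [show ((e ^ m : ℝ)) ^ (1 / (m : ℝ)) = e by
        rw [← Real.rpow_natCast e m, ← Real.rpow_mul he, mul_one_div, div_self hm',
          Real.rpow_one]] at h1
    · -- X * δ'^m ≤ (1/2)^s
      have hpow : (c ^ (1 / (m : ℝ))) ^ m = c := by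
        rw [← Real.rpow_natCast (c ^ (1 / (m : ℝ))) m, ← Real.rpow_mul hc0.le,
          one_div, inv_mul_cancel₀ hm', Real.rpow_one]
      rw [hpow]
      calc X * c ≤ X * (ε / X) := mul_le_mul_of_nonneg_left hc2 hX0.le
        _ = ε := by field_simp
        _ ≤ (1/2 : ℝ) ^ s := min_le_left _ _
  choose! qf δf h1 h2 h3 h4 h5 using key
  -- the recursively defined sequence of (Q, δ)
  set g : ℕ → ℕ × ℝ := fun s =>
    Nat.rec ((0 : ℕ), (1 : ℝ)) (fun s p => (znn (qf s p.1 p.2), δf s p.1 p.2)) s with hgdef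
  have hg0 : g 0 = (0, 1) := rfl
  have hgs : ∀ s, g (s + 1) = (znn (qf s (g s).1 (g s).2), δf s (g s).1 (g s).2) :=
    fun s => rfl
  have hpos : ∀ s, 0 < (g s).2 := by
    intro s
    induction s with
    | zero => norm_num [hg0]
    | succ s ih => rw [hgs]; exact h2 s (g s).1 (g s).2 ih
  have hQ : ∀ s, (g s).1 + 1 ≤ (g (s + 1)).1 := by
    intro s; rw [hgs]; exact h1 s (g s).1 (g s).2 (hpos s)
  have hδle : ∀ s, (g (s + 1)).2 ≤ (g s).2 := by
    intro s; rw [hgs]; exact h3 s (g s).1 (g s).2 (hpos s)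
  have herr : ∀ s, approxErr (A (Nat.unpair s).1) (γ (Nat.unpair s).1)
      (qf s (g s).1 (g s).2) < (g (s + 1)).2 := by
    intro s; rw [hgs]; exact h4 s (g s).1 (g s).2 (hpos s)
  have hbnd : ∀ s, ((g (s + 1)).1 : ℝ) ^ n * (g (s + 1)).2 ^ m ≤ (1/2 : ℝ) ^ s := by
    intro s; rw [hgs]; exact h5 s (g s).1 (g s).2 (hpos s)
  have hδ1 : ∀ s, (g s).2 ≤ 1 := by
    intro s
    induction s with
    | zero => norm_num [hg0]
    | succ s ih => exact le_trans (hδle s) ih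
  have hQmono : Monotone fun s => (g s).1 :=
    monotone_nat_of_le_succ fun s => by have := hQ s; omega
  have hQge : ∀ s, s ≤ (g s).1 := by
    intro s
    induction s with
    | zero => omega
    | succ s ih => have := hQ s; omega
  have hδanti : Antitone fun s => (g s).2 := antitone_nat_of_succ_le hδle
  have hex : ∀ t : ℕ, ∃ s, t ≤ (g s).1 := fun t => ⟨t, hQge t⟩
  refine ⟨fun t => (g (Nat.find (hex t))).2, ?_, fun t => (hpos _).le, ?_, ?_⟩
  · -- Antitone
    intro a b hab
    exact hδanti (Nat.find_mono fun s hs => le_trans hab hs)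
  · -- Summable
    set ψ : ℕ → ℝ := fun t => (g (Nat.find (hex t))).2 with hψdef
    set f : ℕ → ℝ := fun t => (t : ℝ) ^ (n - 1) * ψ t ^ m with hfdef
    have hψnn : ∀ t, 0 ≤ ψ t := fun t => (hpos _).le
    have hψ1 : ∀ t, ψ t ≤ 1 := fun t => hδ1 _
    have hfnn : ∀ t, 0 ≤ f t := fun t =>
      mul_nonneg (by positivity) (pow_nonneg (hψnn t) m)
    have hψle : ∀ S t, (g S).1 < t → ψ t ≤ (g (S + 1)).2 := by
      intro S t ht
      have hfind : S < Nat.find (hex t) := by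
        rw [Nat.lt_find_iff]
        intro j hj hle
        have : (g j).1 ≤ (g S).1 := hQmono hj
        omega
      exact hδanti hfind
    have hblock : ∀ S, ∑ t ∈ Finset.range ((g S).1 + 1), f t
        ≤ 1 + ∑ s ∈ Finset.range S, (1/2 : ℝ) ^ s := by
      intro S
      induction S with
      | zero =>
        rw [show (g 0).1 + 1 = 1 by rw [hg0], Finset.sum_range_one]
        simp only [Finset.range_zero, Finset.sum_empty, add_zero]
        have h01 : ((0 : ℕ) : ℝ) ^ (n - 1) ≤ 1 := by
          rcases Nat.eq_zero_or_pos (n - 1) with h | h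
          · rw [h]; norm_num
          · rw [Nat.cast_zero, zero_pow (by omega : n - 1 ≠ 0)]; norm_num
        calc f 0 = ((0 : ℕ) : ℝ) ^ (n - 1) * ψ 0 ^ m := rfl
          _ ≤ 1 * 1 := mul_le_mul h01 (pow_le_one₀ (hψnn 0) (hψ1 0))
              (pow_nonneg (hψnn 0) m) one_pos.le
          _ = 1 := by ring
      | succ S ih =>
        have hle : (g S).1 + 1 ≤ (g (S + 1)).1 + 1 := by have := hQ S; omega
        rw [← Finset.sum_range_add_sum_Ico f hle]
        have hr : ∑ s ∈ Finset.range (S + 1), (1/2 : ℝ) ^ s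
            = ∑ s ∈ Finset.range S, (1/2 : ℝ) ^ s + (1/2 : ℝ) ^ S :=
          Finset.sum_range_succ _ S
        rw [hr]
        have hIco : ∑ t ∈ Finset.Ico ((g S).1 + 1) ((g (S + 1)).1 + 1), f t
            ≤ (1/2 : ℝ) ^ S := by
          have hbd : ∀ t ∈ Finset.Ico ((g S).1 + 1) ((g (S + 1)).1 + 1),
              f t ≤ ((g (S + 1)).1 : ℝ) ^ (n - 1) * (g (S + 1)).2 ^ m := by
            intro t ht
            rw [Finset.mem_Ico] at ht
            have h1' : (t : ℝ) ^ (n - 1) ≤ ((g (S + 1)).1 : ℝ) ^ (n - 1) :=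
              pow_le_pow_left₀ (by positivity) (by exact_mod_cast (by omega : t ≤ (g (S+1)).1)) _
            have h2' : ψ t ^ m ≤ (g (S + 1)).2 ^ m :=
              pow_le_pow_left₀ (hψnn t) (hψle S t (by omega)) m
            exact mul_le_mul h1' h2' (pow_nonneg (hψnn t) m) (by positivity)
          calc ∑ t ∈ Finset.Ico ((g S).1 + 1) ((g (S + 1)).1 + 1), f t
              ≤ (Finset.Ico ((g S).1 + 1) ((g (S + 1)).1 + 1)).card
                • (((g (S + 1)).1 : ℝ) ^ (n - 1) * (g (S + 1)).2 ^ m) :=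
                Finset.sum_le_card_nsmul _ _ _ hbd
            _ = (((g (S + 1)).1 + 1 - ((g S).1 + 1) : ℕ) : ℝ)
                * (((g (S + 1)).1 : ℝ) ^ (n - 1) * (g (S + 1)).2 ^ m) := by
                rw [Nat.card_Ico, nsmul_eq_mul]
            _ ≤ ((g (S + 1)).1 : ℝ) * (((g (S + 1)).1 : ℝ) ^ (n - 1) * (g (S + 1)).2 ^ m) := by
                apply mul_le_mul_of_nonneg_right
                · exact_mod_cast (by omega : (g (S + 1)).1 + 1 - ((g S).1 + 1) ≤ (g (S + 1)).1)
                · exact mul_nonneg (by positivity) (pow_nonneg (hpos (S + 1)).le m)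
            _ = ((g (S + 1)).1 : ℝ) ^ n * (g (S + 1)).2 ^ m := by
                rw [← mul_assoc, ← pow_succ']
                congr 2
                omega
            _ ≤ (1/2 : ℝ) ^ S := hbnd S
        linarith
    apply summable_of_sum_range_le (c := 3) hfnn
    intro T
    have h1' : ∑ t ∈ Finset.range T, f t ≤ ∑ t ∈ Finset.range ((g T).1 + 1), f t := by
      apply Finset.sum_le_sum_of_subset_of_nonneg
      · exact Finset.range_subset_range.mpr (by have := hQge T; omega)
      · intro t _ _; exact hfnn t
    have h2' := hblock T
    have h3' := sum_geometric_two_le T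
    linarith
  · -- Infinitely many solutions
    intro i
    by_contra hfin
    rw [Set.not_infinite] at hfin
    obtain ⟨B, hB⟩ := (hfin.image znn).bddAbove
    set s := Nat.pair i B with hsdef
    have hiu : (Nat.unpair s).1 = i := by rw [hsdef, Nat.unpair_pair]
    set w := qf s (g s).1 (g s).2 with hwdef
    have hznn : znn w = (g (s + 1)).1 := by rw [hgs]
    have hmem : w ∈ {q : Fin n → ℤ |
        approxErr (A i) (γ i) q < (g (Nat.find (hex (znn q)))).2} := by
      have he1 : approxErr (A i) (γ i) w < (g (s + 1)).2 := by
        have := herr s; rwa [hiu] at this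
      have he2 : (g (s + 1)).2 ≤ (g (Nat.find (hex (znn w)))).2 := by
        have hfle : Nat.find (hex (znn w)) ≤ s + 1 := Nat.find_le (by rw [hznn])
        exact hδanti hfle
      exact lt_of_lt_of_le he1 he2
    have hBw : znn w ≤ B := hB (Set.mem_image_of_mem znn hmem)
    have : B ≤ s := Nat.right_le_pair i B
    have := hQge (s + 1)
    omega
end

section
/- Let α ∈ [0,1) be irrational and γ ∈ [0,1). If ∑_{Q=1}^∞ min_{1 ≤ q ≤ Q} ⟨qα − γ⟩ < ∞, then γ ∈ 𝒰₁[α], i.e., for all sufficiently large Q ∈ ℕ there exists an integer q with 1 ≤ q ≤ Q and ⟨qα − γ⟩ < Q^{−1}. Conversely, if there is τ > 1 such that for all sufficiently large Q there exists 1 ≤ q ≤ Q with ⟨qα − γ⟩ < Q^{−τ}, then ∑_{Q=1}^∞ min_{1 ≤ q ≤ Q} ⟨qα − γ⟩ < ∞. -/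
open Filter

/-- Distance of a real number to the nearest integer. -/
noncomputable def dz1 (x : ℝ) : ℝ := ⨅ p : ℤ, |x - (p : ℝ)|

/-- `min_{1 ≤ q ≤ Q} ⟨qα - γ⟩`. -/
noncomputable def minQ (α γ : ℝ) (Q : ℕ) : ℝ :=
  sInf {x | ∃ q : ℕ, 1 ≤ q ∧ q ≤ Q ∧ x = dz1 ((q : ℝ) * α - γ)}

lemma dz1_nonneg (x : ℝ) : 0 ≤ dz1 x :=
  Real.iInf_nonneg fun p => abs_nonneg _

lemma sQ_eq (α γ : ℝ) (Q : ℕ) :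
    {x | ∃ q : ℕ, 1 ≤ q ∧ q ≤ Q ∧ x = dz1 ((q : ℝ) * α - γ)} =
      (fun q : ℕ => dz1 ((q : ℝ) * α - γ)) '' (Set.Icc 1 Q) := by
  ext x
  simp [Set.mem_image, eq_comm, and_assoc]

lemma sQ_finite (α γ : ℝ) (Q : ℕ) :
    {x | ∃ q : ℕ, 1 ≤ q ∧ q ≤ Q ∧ x = dz1 ((q : ℝ) * α - γ)}.Finite := by
  rw [sQ_eq]
  exact (Set.finite_Icc 1 Q).image _

lemma sQ_bdd (α γ : ℝ) (Q : ℕ) :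
    BddBelow {x | ∃ q : ℕ, 1 ≤ q ∧ q ≤ Q ∧ x = dz1 ((q : ℝ) * α - γ)} := by
  refine ⟨0, fun x hx => ?_⟩
  obtain ⟨q, _, _, rfl⟩ := hx
  exact dz1_nonneg _

lemma minQ_le (α γ : ℝ) {q Q : ℕ} (h1 : 1 ≤ q) (h2 : q ≤ Q) :
    minQ α γ Q ≤ dz1 ((q : ℝ) * α - γ) :=
  csInf_le (sQ_bdd α γ Q) ⟨q, h1, h2, rfl⟩

lemma minQ_mem (α γ : ℝ) {Q : ℕ} (hQ : 1 ≤ Q) :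
    ∃ q : ℕ, 1 ≤ q ∧ q ≤ Q ∧ minQ α γ Q = dz1 ((q : ℝ) * α - γ) := by
  have hne : {x | ∃ q : ℕ, 1 ≤ q ∧ q ≤ Q ∧ x = dz1 ((q : ℝ) * α - γ)}.Nonempty :=
    ⟨dz1 ((1 : ℝ) * α - γ), ⟨1, le_refl 1, hQ, by norm_num⟩⟩
  exact hne.csInf_mem (sQ_finite α γ Q)

lemma minQ_nonneg (α γ : ℝ) {Q : ℕ} (hQ : 1 ≤ Q) : 0 ≤ minQ α γ Q := by
  obtain ⟨q, _, _, h⟩ := minQ_mem α γ hQ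
  rw [h]; exact dz1_nonneg _

lemma minQ_anti (α γ : ℝ) {Q Q' : ℕ} (hQ : 1 ≤ Q) (h : Q ≤ Q') :
    minQ α γ Q' ≤ minQ α γ Q := by
  refine csInf_le_csInf (sQ_bdd α γ Q')
    ⟨dz1 ((1 : ℝ) * α - γ), ⟨1, le_refl 1, hQ, by norm_num⟩⟩ ?_
  rintro x ⟨q, h1, h2, rfl⟩
  exact ⟨q, h1, h2.trans h, rfl⟩

theorem gamma_sandwich (α : ℝ) (hα : Irrational α) (h0 : 0 ≤ α) (h1 : α < 1)
    (γ : ℝ) (hγ0 : 0 ≤ γ) (hγ1 : γ < 1) :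
    (Summable (fun Q : ℕ => if 1 ≤ Q then minQ α γ Q else 0) →
      ∃ Q₀ : ℕ, ∀ Q : ℕ, Q₀ ≤ Q → ∃ q : ℕ, 1 ≤ q ∧ q ≤ Q ∧
        dz1 ((q : ℝ) * α - γ) < (Q : ℝ)⁻¹) ∧
    ((∃ τ : ℝ, 1 < τ ∧ ∃ Q₀ : ℕ, ∀ Q : ℕ, Q₀ ≤ Q → ∃ q : ℕ, 1 ≤ q ∧ q ≤ Q ∧
        dz1 ((q : ℝ) * α - γ) < (Q : ℝ) ^ (-τ)) →
      Summable (fun Q : ℕ => if 1 ≤ Q then minQ α γ Q else 0)) := by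
  set a : ℕ → ℝ := fun Q => if 1 ≤ Q then minQ α γ Q else 0 with ha
  have ha_nonneg : ∀ Q, 0 ≤ a Q := by
    intro Q
    by_cases h : 1 ≤ Q
    · simp [ha, h, minQ_nonneg α γ h]
    · simp [ha, h]
  have ha_anti : ∀ {Q Q' : ℕ}, 1 ≤ Q → Q ≤ Q' → a Q' ≤ a Q := by
    intro Q Q' hQ h
    simp only [ha, if_pos hQ, if_pos (hQ.trans h)]
    exact minQ_anti α γ hQ h
  constructor
  · -- forward direction
    intro hsum
    set s : ℕ → ℝ := fun n => ∑ k ∈ Finset.range n, a k with hs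
    have hS : Tendsto s atTop (nhds (∑' k, a k)) := hsum.hasSum.tendsto_sum_nat
    have hhalf : Tendsto (fun Q : ℕ => Q / 2 + 1) atTop atTop := by
      refine tendsto_atTop_atTop.mpr fun b => ⟨2 * b, fun Q hQ => ?_⟩
      omega
    have hF : Tendsto (fun Q : ℕ => s (Q + 1) - s (Q / 2 + 1)) atTop (nhds 0) := by
      have h1' : Tendsto (fun Q : ℕ => s (Q + 1)) atTop (nhds (∑' k, a k)) :=
        hS.comp (tendsto_atTop_atTop.mpr fun b => ⟨b, fun Q hQ => by omega⟩)
      have h2' : Tendsto (fun Q : ℕ => s (Q / 2 + 1)) atTop (nhds (∑' k, a k)) :=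
        hS.comp hhalf
      simpa using h1'.sub h2'
    have hkey : ∀ Q : ℕ, 1 ≤ Q → (Q : ℝ) * a Q ≤ 2 * (s (Q + 1) - s (Q / 2 + 1)) := by
      intro Q hQ
      have hle : Q / 2 + 1 ≤ Q + 1 := by omega
      have hsum_eq : s (Q + 1) - s (Q / 2 + 1) = ∑ k ∈ Finset.Ico (Q / 2 + 1) (Q + 1), a k := by
        rw [hs]
        exact (Finset.sum_Ico_eq_sub _ hle).symm
      have hcard : (Finset.Ico (Q / 2 + 1) (Q + 1)).card = Q - Q / 2 := by
        rw [Nat.card_Ico]; omega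
      have hbound : ((Q - Q / 2 : ℕ) : ℝ) * a Q ≤ ∑ k ∈ Finset.Ico (Q / 2 + 1) (Q + 1), a k := by
        rw [← hcard, ← nsmul_eq_mul]
        refine Finset.card_nsmul_le_sum _ _ _ fun k hk => ?_
        rw [Finset.mem_Ico] at hk
        exact ha_anti (by omega) (by omega)
      have hc : (Q : ℝ) ≤ 2 * ((Q - Q / 2 : ℕ) : ℝ) := by
        have : Q ≤ 2 * (Q - Q / 2) := by omega
        exact_mod_cast this
      have haQ := ha_nonneg Q
      rw [hsum_eq]
      nlinarith [hbound, hc, haQ]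
    have hev : ∀ᶠ Q : ℕ in atTop, s (Q + 1) - s (Q / 2 + 1) < 1 / 2 :=
      hF.eventually_lt_const (by norm_num)
    obtain ⟨N, hNev⟩ := eventually_atTop.mp hev
    refine ⟨max N 1, fun Q hQ => ?_⟩
    have hQ1 : 1 ≤ Q := le_trans (le_max_right N 1) hQ
    have hQN : N ≤ Q := le_trans (le_max_left N 1) hQ
    have hlt : (Q : ℝ) * a Q < 1 := by
      have := hkey Q hQ1
      have := hNev Q hQN
      linarith
    have hQpos : (0 : ℝ) < Q := by exact_mod_cast hQ1
    have hminlt : minQ α γ Q < (Q : ℝ)⁻¹ := by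
      have haq : a Q = minQ α γ Q := by simp [ha, hQ1]
      rw [inv_eq_one_div, lt_div_iff₀ hQpos]
      rw [haq] at hlt
      linarith [hlt]
    obtain ⟨q, hq1, hq2, hq3⟩ := minQ_mem α γ hQ1
    exact ⟨q, hq1, hq2, hq3 ▸ hminlt⟩
  · -- backward direction
    rintro ⟨τ, hτ, Q₀, hQ₀⟩
    set N := max Q₀ 1 with hN
    rw [← summable_nat_add_iff N]
    have hg0 : Summable (fun n : ℕ => (n : ℝ) ^ (-τ)) :=
      Real.summable_nat_rpow.mpr (by linarith)
    have hg : Summable (fun n : ℕ => ((n + N : ℕ) : ℝ) ^ (-τ)) :=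
      (summable_nat_add_iff (f := fun n : ℕ => (n : ℝ) ^ (-τ)) N).mpr hg0
    refine Summable.of_nonneg_of_le (fun n => ha_nonneg _) (fun n => ?_) hg
    have hQ1 : 1 ≤ n + N := by omega
    have hQ0 : Q₀ ≤ n + N := by omega
    obtain ⟨q, hq1, hq2, hq3⟩ := hQ₀ (n + N) hQ0
    calc a (n + N) = minQ α γ (n + N) := by simp [ha, hQ1]
      _ ≤ dz1 ((q : ℝ) * α - γ) := minQ_le α γ hq1 hq2
      _ ≤ ((n + N : ℕ) : ℝ) ^ (-τ) := hq3.le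
end
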